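/- Define the 2×2 matrix weight W(x) = [[1+x², 1−x],[1−x, (1−x)²]] and, for n ∈ ℕ, Λₙ = n(n+3)·I + (1/2)[[1,1],[1,−1]]. Let M = [[3,−3],[1,−1]]. Then for every x ∈ ℝ and every N ∈ ℕ, the matrix (M − x(Λ_{N+1} + Λ_N)) W(x) is symmetric. -/
import Mathlib


open Matrix

/-- The matrix weight of Example 4.4. -/
noncomputable def exW (x : ℝ) : Matrix (Fin 2) (Fin 2) ℝ :=
  !![1 + x ^ 2, 1 - x; 1 - x, (1 - x) ^ 2]

/-- Eigenvalue of the operator `(D₊ - D₋)/2` on the monic orthogonal polynomial `Rₙ`. -/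
noncomputable def exΛ (n : ℕ) : Matrix (Fin 2) (Fin 2) ℝ :=
  ((n : ℝ) * ((n : ℝ) + 3)) • (1 : Matrix (Fin 2) (Fin 2) ℝ) + (1 / 2 : ℝ) • !![1, 1; 1, -1]

/-- Example 4.4: hypothesis (3.1) holds for `(D₊ - D₋)/2` with `M = [[3,-3],[1,-1]]`:
`(M - x(Λ_{N+1} + Λ_N)) W(x)` is symmetric for every `x ∈ ℝ` and `N ∈ ℕ`. -/
theorem stmt11 (x : ℝ) (N : ℕ) :
    (((!![3, -3; 1, -1] : Matrix (Fin 2) (Fin 2) ℝ) - x • (exΛ (N + 1) + exΛ N)) *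
      exW x).IsSymm := by
  unfold exW exΛ
  rw [Matrix.IsSymm]
  ext i j
  fin_cases i <;> fin_cases j <;>
    simp [Matrix.mul_apply, Fin.sum_univ_succ, Matrix.one_apply, Matrix.transpose_apply] <;>
    ring
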